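/- Let χ be a Dirichlet character modulo N with N ≥ 3, let κ ≥ 1 be an integer with κ ≡ e(χ) (mod 2), and set N̄ := ⌊(N−1)/2⌋ and ζ_κ := e^{2πi/κ}. For j with χ(j) ≠ 0 define χ(j)^{1/κ} := e^{i·arg(χ(j))/κ} where the argument is taken in [0, 2π), and set χ(j)^{1/κ} := 0 when χ(j) = 0. Then for every complex number t, ∏_{n=1}^{∞} (1 − χ(n) t^{κ}/n^{κ}) = (2^{N−1}/N)^{κ/2} · ∏_{j=1}^{N̄} ∏_{l=1}^{κ} sin( π (j − χ(j)^{1/κ} ζ_κ^{l} t) / N ), where (2^{N−1}/N)^{κ/2} is the positive real power. -/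

import Mathlib

open Complex Filter Finset Topology

noncomputable section

/-- The parity `e(χ) ∈ {0,1}` of a Dirichlet character: `χ(-1) = (-1)^{e(χ)}`. -/
def charParity {N : ℕ} (χ : DirichletCharacter ℂ N) : ℕ :=
  if χ (-1) = 1 then 0 else 1

/-- The argument of a complex number, normalized to lie in `[0, 2π)`. -/
def arg2pi (z : ℂ) : ℝ :=
  if 0 ≤ Complex.arg z then Complex.arg z else Complex.arg z + 2 * Real.pi

/-- The `κ`-th root `χ(j)^{1/κ} = e^{i·arg(χ(j))/κ}` (argument in `[0,2π)`),
with `χ(j)^{1/κ} = 0` when `χ(j) = 0`. -/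
def chiRoot {N : ℕ} (χ : DirichletCharacter ℂ N) (κ : ℕ) (j : ℕ) : ℂ :=
  if χ j = 0 then 0 else Complex.exp (Complex.I * arg2pi (χ j) / κ)

/-!
Grouping the factors by residue classes `±j (mod N)` and splitting `1 - χ(j) (t/n)^κ` over the
`κ`-th roots of unity `ζ^l`, each pair of classes contributes, for every `l`, a product
`∏_m (1 - a/(m + w)) (1 + a/(m + 1 - w))` with `w = j/N` and `a = χ(j)^{1/κ} ζ^l t/N`; the parity
condition `χ(-1) = (-1)^κ` is what puts the class of `-j` in this form, and the classes `0` and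
`N/2` contribute nothing since `χ` vanishes there. Up to a factor tending to `1`, the partial
products of such a product are ratios of Euler's partial products for `sin (π z)`, so it converges
to `sin (π (w - a)) / sin (π w)`. The denominators multiply to
`(∏_{j ≤ N̄} sin (π j / N))^κ = (N / 2^{N-1})^{κ/2}`, by `∏_{0<k<N} |1 - μ^k| = N` for a primitive
`N`-th root of unity `μ`. All this concerns partial products whose length is a multiple of `N`;
since the factors tend to `1`, the other partial products have the same limit.
-/

open scoped Real Nat

namespace Finset

variable {M : Type*} [CommMonoid M]

theorem prod_Icc_one_eq_prod_range (f : ℕ → M) (n : ℕ) :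
    ∏ i ∈ Icc 1 n, f i = ∏ i ∈ range n, f (i + 1) := by
  rw [range_eq_Ico, prod_Ico_add' f 0 n 1]
  rfl

theorem prod_range_mul_eq_prod_prod (f : ℕ → M) (K N : ℕ) :
    ∏ n ∈ range (K * N), f n = ∏ r ∈ range N, ∏ m ∈ range K, f (r + m * N) := by
  induction K with
  | zero => simp
  | succ K ih =>
    rw [Nat.succ_mul, prod_range_add, ih, ← prod_mul_distrib]
    exact prod_congr rfl fun r _ => by rw [prod_range_succ, add_comm (K * N)]

theorem prod_Icc_mul_eq_prod_Icc_prod (f : ℕ → M) (K N : ℕ) :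
    ∏ n ∈ Icc 1 (K * N), f n = ∏ r ∈ Icc 1 N, ∏ m ∈ range K, f (r + m * N) := by
  simp only [prod_Icc_one_eq_prod_range, prod_range_mul_eq_prod_prod, add_right_comm]

theorem prod_Icc_sub_one_eq_prod_mul_reflect (g : ℕ → M) {N : ℕ}
    (hmid : ∀ r, 2 * r = N → g r = 1) :
    ∏ r ∈ Icc 1 (N - 1), g r = ∏ j ∈ Icc 1 ((N - 1) / 2), g j * g (N - j) := by
  set h := (N - 1) / 2
  have hreflect : ∏ j ∈ Icc 1 h, g (N - j) = ∏ r ∈ Ioc (N - 1 - h) (N - 1), g r := by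
    refine prod_nbij' (N - ·) (N - ·) ?_ ?_ ?_ ?_ fun _ _ => rfl <;> intro a ha <;>
      simp only [mem_Icc, mem_Ioc] at ha ⊢ <;> omega
  have hmiddle : ∏ r ∈ Ioc h (N - 1 - h), g r = 1 :=
    prod_eq_one fun r hr => hmid r (by simp only [mem_Ioc] at hr; omega)
  have hIcc (n : ℕ) : Icc 1 n = Ioc 0 n := rfl
  rw [prod_mul_distrib, hreflect, hIcc, hIcc,
    ← prod_Ioc_consecutive _ (Nat.zero_le _) (Nat.sub_le (N - 1) h),
    ← prod_Ioc_consecutive _ (Nat.zero_le h) (by omega : h ≤ N - 1 - h), hmiddle, mul_one]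

end Finset

theorem tendsto_prod_Icc_of_tendsto_prod_Icc_mul {M : Type*} [CommMonoid M]
    [TopologicalSpace M] [ContinuousMul M] {f : ℕ → M} {N : ℕ} (hN : N ≠ 0) {L : M}
    (hf : Tendsto f atTop (𝓝 1))
    (hL : Tendsto (fun K => ∏ n ∈ Icc 1 (K * N), f n) atTop (𝓝 L)) :
    Tendsto (fun n => ∏ k ∈ Icc 1 n, f k) atTop (𝓝 L) := by
  have hN' : 0 < N := Nat.pos_of_ne_zero hN
  -- the fewer than `N` factors beyond the last multiple of `N`, padded with `1`s to exactly `N`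
  have hsplit (n : ℕ) : ∏ k ∈ Icc 1 n, f k = (∏ k ∈ Icc 1 (n / N * N), f k) *
      ∏ i ∈ range N, if i ∈ range (n % N) then f (n / N * N + i + 1) else 1 := by
    rw [prod_ite_mem, inter_eq_right.2 (range_subset_range.2 (Nat.mod_lt n hN').le),
      prod_Icc_one_eq_prod_range, prod_Icc_one_eq_prod_range, ← prod_range_add, Nat.div_add_mod']
  have hshift (i : ℕ) : Tendsto (fun n => n / N * N + i + 1) atTop atTop :=
    tendsto_atTop_mono (fun n => by omega)
      ((Nat.tendsto_div_const_atTop hN).atTop_mul_const' hN')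
  have htail : Tendsto (fun n => ∏ i ∈ range N,
      if i ∈ range (n % N) then f (n / N * N + i + 1) else 1) atTop (𝓝 1) := by
    simpa only [prod_const_one, Function.comp_def] using tendsto_finsetProd (range N) fun i _ =>
      (hf.comp (hshift i)).if' (p := fun n => i ∈ range (n % N)) tendsto_const_nhds
  have := (hL.comp (Nat.tendsto_div_const_atTop hN)).mul htail
  rw [mul_one] at this
  exact this.congr fun n => (hsplit n).symm

theorem IsPrimitiveRoot.prod_Icc_one_sub_pow_mul {R : Type*} [CommRing R] [IsDomain R] {ζ : R}
    {n : ℕ} (h : IsPrimitiveRoot ζ n) (hn : 0 < n) (x : R) :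
    ∏ i ∈ Icc 1 n, (1 - ζ ^ i * x) = 1 - x ^ n := by
  have hrange (y : R) : ∏ i ∈ range n, (1 - ζ ^ i * y) = 1 - y ^ n := by
    simpa [Polynomial.eval_prod] using
      congrArg (Polynomial.eval 1) (X_pow_sub_C_eq_prod h hn rfl).symm
  simp only [prod_Icc_one_eq_prod_range, pow_succ, mul_assoc, hrange, mul_pow, h.pow_eq_one,
    one_mul]

namespace Complex

theorem pi_mul_prod_range_succ_eq (z : ℂ) (K : ℕ) :
    π * ∏ m ∈ range (K + 1), ((m + z) * (m + 1 - z)) =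
      (π * z * ∏ i ∈ range K, (1 - z ^ 2 / ((i : ℂ) + 1) ^ 2)) *
        ((K ! : ℂ) ^ 2 * (K + 1 - z)) := by
  induction K with
  | zero => simp [mul_assoc]
  | succ K ih =>
    have hK : (K : ℂ) + 1 ≠ 0 := Nat.cast_add_one_ne_zero K
    rw [prod_range_succ, ← mul_assoc, ih, prod_range_succ, Nat.factorial_succ]
    push_cast
    field_simp
    ring

theorem tendsto_natCast_add_div_natCast_add (a b : ℂ) :
    Tendsto (fun n : ℕ => (n + a) / (n + b)) atTop (𝓝 1) := by
  have := (tendsto_natCast_div_add_atTop b).div (tendsto_natCast_div_add_atTop a) one_ne_zero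
  rw [div_one] at this
  refine this.congr' ((eventually_ne_atTop 0).mono fun n hn => ?_)
  rw [Pi.div_apply, div_div_div_cancel_left' _ _ (Nat.cast_ne_zero.2 hn)]

theorem tendsto_prod_one_sub_div_mul_one_add_div {a w : ℂ} (hw : sin (π * w) ≠ 0) :
    Tendsto (fun K => ∏ m ∈ range K, (1 - a / (m + w)) * (1 + a / (m + 1 - w))) atTop
      (𝓝 (sin (π * (w - a)) / sin (π * w))) := by
  set z := w - a
  have hw_ne_int (n : ℤ) : w ≠ n := fun h => hw (sin_eq_zero_iff.2 ⟨n, by rw [h, mul_comm]⟩)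
  have hfactor (m : ℕ) : (1 - a / (m + w)) * (1 + a / (m + 1 - w)) =
      ((m + z) * (m + 1 - z)) / ((m + w) * (m + 1 - w)) := by
    have h₁ : (m : ℂ) + w ≠ 0 := fun h => hw_ne_int (-m) (by push_cast; linear_combination h)
    have h₂ : (m : ℂ) + 1 - w ≠ 0 := fun h =>
      hw_ne_int (m + 1) (by push_cast; linear_combination -h)
    field_simp
    ring
  have hpartial (K : ℕ) : ∏ m ∈ range (K + 1), (1 - a / (m + w)) * (1 + a / (m + 1 - w)) =
      (π * z * ∏ i ∈ range K, (1 - z ^ 2 / ((i : ℂ) + 1) ^ 2)) /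
        (π * w * ∏ i ∈ range K, (1 - w ^ 2 / ((i : ℂ) + 1) ^ 2)) *
          ((K + 1 - z) / (K + 1 - w)) := by
    have hπ : (π : ℂ) ≠ 0 := ofReal_ne_zero.2 Real.pi_ne_zero
    have hK : (K ! : ℂ) ^ 2 ≠ 0 := pow_ne_zero _ (Nat.cast_ne_zero.2 K.factorial_ne_zero)
    rw [prod_congr rfl fun m _ => hfactor m, prod_div_distrib, ← mul_div_mul_left _ _ hπ,
      pi_mul_prod_range_succ_eq, pi_mul_prod_range_succ_eq, mul_div_mul_comm,
      mul_div_mul_left _ _ hK]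
  have hlim := ((tendsto_euler_sin_prod z).div (tendsto_euler_sin_prod w) hw).mul
    (tendsto_natCast_add_div_natCast_add (1 - z) (1 - w))
  rw [mul_one] at hlim
  refine (tendsto_add_atTop_iff_nat 1).1 (hlim.congr fun K => ?_)
  rw [hpartial, Pi.div_apply, add_sub_assoc, add_sub_assoc]

theorem tendsto_prod_one_sub_pow_mul_one_sub_pow {κ : ℕ} {ζ : ℂ} (hζ : IsPrimitiveRoot ζ κ)
    (hκ : 0 < κ) {x N : ℂ} (hN : N ≠ 0) (hx : sin (π * x / N) ≠ 0) (c t : ℂ) :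
    Tendsto (fun K => ∏ m ∈ range K,
        (1 - (c * t / (x + m * N)) ^ κ) * (1 - (-c * t / ((m + 1) * N - x)) ^ κ)) atTop
      (𝓝 (∏ l ∈ Icc 1 κ, sin (π * (x - c * ζ ^ l * t) / N) / sin (π * x / N))) := by
  have hfactor (m : ℕ) :
      (1 - (c * t / (x + m * N)) ^ κ) * (1 - (-c * t / ((m + 1) * N - x)) ^ κ) =
        ∏ l ∈ Icc 1 κ,
          (1 - c * ζ ^ l * t / N / (m + x / N)) * (1 + c * ζ ^ l * t / N / (m + 1 - x / N)) := by
    have h₁ : N * (m + x / N) = x + m * N := by field_simp; ring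
    have h₂ : N * (m + 1 - x / N) = (m + 1) * N - x := by field_simp
    rw [← hζ.prod_Icc_one_sub_pow_mul hκ, ← hζ.prod_Icc_one_sub_pow_mul hκ,
      ← prod_mul_distrib]
    refine prod_congr rfl fun l _ => ?_
    rw [div_div, div_div, h₁, h₂]
    ring
  simp only [hfactor]
  rw [funext fun K => Finset.prod_comm (s := range K) (t := Icc 1 κ)]
  refine tendsto_finsetProd _ fun l _ => ?_
  convert tendsto_prod_one_sub_div_mul_one_add_div (a := c * ζ ^ l * t / N) (w := x / N)
    (by rwa [← mul_div_assoc]) using 2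
  ring_nf

end Complex

theorem tendsto_one_sub_mul_div_pow_atTop {a : ℕ → ℂ} {C : ℝ} (ha : ∀ n, ‖a n‖ ≤ C)
    (t : ℂ) {κ : ℕ} (hκ : κ ≠ 0) :
    Tendsto (fun n : ℕ => 1 - a n * t ^ κ / n ^ κ) atTop (𝓝 1) := by
  have hpow : Tendsto (fun n : ℕ => C * ‖t / n‖ ^ κ) atTop (𝓝 0) := by
    simpa [hκ] using ((tendsto_const_div_atTop_nhds_zero_nat t).norm.pow κ).const_mul C
  have hsmall : Tendsto (fun n : ℕ => a n * t ^ κ / n ^ κ) atTop (𝓝 0) := by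
    refine squeeze_zero_norm (fun n => ?_) hpow
    rw [mul_div_assoc, ← div_pow, norm_mul, norm_pow]
    exact mul_le_mul_of_nonneg_right (ha n) (by positivity)
  simpa using tendsto_const_nhds.sub hsmall

namespace Real

theorem sin_pi_mul_div_pos {k N : ℕ} (hk : 0 < k) (hkN : k < N) : 0 < sin (π * k / N) := by
  have hN : (0 : ℝ) < N := by exact_mod_cast hk.trans hkN
  apply sin_pos_of_pos_of_lt_pi (by positivity)
  rw [div_lt_iff₀ hN]
  exact mul_lt_mul_of_pos_left (by exact_mod_cast hkN) pi_pos

theorem prod_two_mul_sin_pi_mul_div {N : ℕ} (hN : N ≠ 0) :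
    ∏ k ∈ Icc 1 (N - 1), 2 * sin (π * k / N) = N := by
  set μ := Complex.exp (2 * π * Complex.I / N)
  have hN1 : N - 1 + 1 = N := by omega
  have hμ : IsPrimitiveRoot μ (N - 1 + 1) := by
    rw [hN1]
    exact Complex.isPrimitiveRoot_exp N hN
  have hterm : ∀ k ∈ Icc 1 (N - 1), 2 * sin (π * k / N) = ‖1 - μ ^ k‖ := by
    intro k hk
    rw [mem_Icc] at hk
    have harg :
        (k : ℂ) * (2 * π * Complex.I / N) = Complex.I * ((2 * (π * k / N) : ℝ) : ℂ) := by
      push_cast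
      ring
    rw [norm_sub_rev, ← Complex.exp_nat_mul, harg, Complex.norm_exp_I_mul_ofReal_sub_one,
      mul_div_cancel_left₀ _ two_ne_zero,
      Real.norm_of_nonneg (mul_pos two_pos (sin_pi_mul_div_pos hk.1 (by omega))).le]
  rw [prod_congr rfl hterm, ← norm_prod, prod_Icc_one_eq_prod_range,
    hμ.prod_one_sub_pow_eq_order, ← Nat.cast_add_one, hN1, Complex.norm_natCast]

theorem prod_sin_pi_mul_div_pos (N : ℕ) : 0 < ∏ k ∈ Icc 1 ((N - 1) / 2), sin (π * k / N) :=
  prod_pos fun k hk => by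
    rw [mem_Icc] at hk
    exact sin_pi_mul_div_pos (by omega) (by omega)

theorem prod_sin_pi_mul_div_sq {N : ℕ} (hN : N ≠ 0) :
    (∏ k ∈ Icc 1 ((N - 1) / 2), sin (π * k / N)) ^ 2 = N / 2 ^ (N - 1) := by
  have hN' : (N : ℝ) ≠ 0 := Nat.cast_ne_zero.2 hN
  have hfull : ∏ k ∈ Icc 1 (N - 1), sin (π * k / N) = N / 2 ^ (N - 1) := by
    have h := prod_two_mul_sin_pi_mul_div hN
    rw [prod_mul_distrib, prod_const, Nat.card_Icc, Nat.add_sub_cancel] at h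
    rw [eq_div_iff (by positivity), mul_comm, h]
  rw [← hfull, prod_Icc_sub_one_eq_prod_mul_reflect, sq, ← prod_mul_distrib]
  · refine prod_congr rfl fun k hk => ?_
    rw [mem_Icc] at hk
    rw [Nat.cast_sub (by omega), mul_sub, sub_div, mul_div_cancel_right₀ _ hN', sin_pi_sub]
  · intro r hr
    have hr' : (r : ℝ) ≠ 0 := Nat.cast_ne_zero.2 (by omega)
    rw [← hr, Nat.cast_mul, Nat.cast_two, mul_comm (2 : ℝ), ← div_div,
      mul_div_cancel_right₀ _ hr', sin_pi_div_two]

theorem two_pow_div_rpow_half_eq_inv_prod_sin_pow {N : ℕ} (hN : N ≠ 0) (κ : ℕ) :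
    ((2 ^ (N - 1) / N : ℝ)) ^ ((κ : ℝ) / 2) =
      ((∏ k ∈ Icc 1 ((N - 1) / 2), sin (π * k / N)) ^ κ)⁻¹ := by
  rw [← inv_div, ← prod_sin_pi_mul_div_sq hN, inv_rpow (by positivity), ← rpow_natCast,
    ← rpow_mul (prod_sin_pi_mul_div_pos N).le, Nat.cast_two,
    mul_div_cancel₀ _ two_ne_zero, rpow_natCast]

end Real

theorem exp_arg2pi_mul_I (z : ℂ) : exp (arg2pi z * I) = exp (arg z * I) := by
  unfold arg2pi
  split_ifs
  · rfl
  · push_cast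
    rw [add_mul, exp_add, exp_two_pi_mul_I, mul_one]

namespace DirichletCharacter

variable {N : ℕ} (χ : DirichletCharacter ℂ N)

theorem map_neg_one_eq_neg_one_pow_charParity : χ (-1) = (-1) ^ charParity χ := by
  unfold charParity
  split_ifs with h
  · rw [h, pow_zero]
  · rw [pow_one]
    exact χ.even_or_odd.resolve_left h

theorem chiRoot_pow {κ : ℕ} (hκ : κ ≠ 0) (j : ℕ) : chiRoot χ κ j ^ κ = χ j := by
  by_cases hj : χ j = 0
  · rw [chiRoot, if_pos hj, hj, zero_pow hκ]
  have hunit : IsUnit (j : ZMod N) := by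
    by_contra h
    exact hj (χ.map_nonunit h)
  have hnorm : ‖χ j‖ = 1 := by simpa using χ.unit_norm_eq_one hunit.unit
  rw [chiRoot, if_neg hj, ← exp_nat_mul,
    show (κ : ℂ) * (I * arg2pi (χ j) / κ) = arg2pi (χ j) * I by field_simp, exp_arg2pi_mul_I]
  simpa [hnorm] using norm_mul_exp_arg_mul_I (χ j)

theorem prod_Icc_mul_eq_prod_pairs (hN : 3 ≤ N) {κ : ℕ} (hκ : κ ≠ 0)
    (hpar : χ (-1) = (-1) ^ κ) (t : ℂ) (K : ℕ) :
    ∏ n ∈ Icc 1 (K * N), (1 - χ n * t ^ κ / (n : ℂ) ^ κ) =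
      ∏ j ∈ Icc 1 ((N - 1) / 2), ∏ m ∈ range K,
        (1 - (chiRoot χ κ j * t / (j + m * N)) ^ κ) *
          (1 - (-chiRoot χ κ j * t / ((m + 1) * N - j)) ^ κ) := by
  set F : ℕ → ℂ := fun n => 1 - χ n * t ^ κ / (n : ℂ) ^ κ
  have hperiod (r m : ℕ) : χ ((r + m * N : ℕ) : ZMod N) = χ r := by simp
  have hvanish (r : ℕ) (hr : ¬IsUnit (r : ZMod N)) : ∏ m ∈ range K, F (r + m * N) = 1 :=
    prod_eq_one fun m _ => by simp [F, χ.map_nonunit hr]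
  have hlast : ∏ r ∈ Icc 1 N, ∏ m ∈ range K, F (r + m * N) =
      ∏ r ∈ Icc 1 (N - 1), ∏ m ∈ range K, F (r + m * N) := by
    rw [← prod_erase_mul _ _ (mem_Icc.2 ⟨by omega, le_rfl⟩), hvanish N ?_, mul_one]
    · congr 1
      ext r
      simp only [mem_erase, mem_Icc]
      omega
    · rw [ZMod.isUnit_iff_coprime, Nat.coprime_self]
      omega
  rw [prod_Icc_mul_eq_prod_Icc_prod, hlast, prod_Icc_sub_one_eq_prod_mul_reflect]
  · refine prod_congr rfl fun j hj => ?_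
    rw [mem_Icc] at hj
    rw [← prod_mul_distrib]
    refine prod_congr rfl fun m _ => ?_
    have hneg : ((N - j : ℕ) : ZMod N) = -1 * j := by
      push_cast [Nat.cast_sub (by omega : j ≤ N)]
      simp
    simp only [F, hperiod]
    rw [hneg, map_mul, hpar, ← χ.chiRoot_pow hκ j, div_pow, div_pow, mul_pow, mul_pow, neg_pow]
    push_cast [Nat.cast_sub (by omega : j ≤ N)]
    ring
  · intro r hr
    refine hvanish r fun hunit => ?_
    rw [ZMod.isUnit_iff_coprime] at hunit
    have := (Nat.coprime_self r).1 (hunit.coprime_dvd_right ⟨2, by omega⟩)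
    omega

end DirichletCharacter

/-- **Formula (3.4)**: for a Dirichlet character `χ` mod `N ≥ 3` and `κ ≥ 1` with
`κ ≡ e(χ) (mod 2)`, for every `t ∈ ℂ`,
`∏_{n≥1} (1 - χ(n) t^κ/n^κ)
  = (2^{N-1}/N)^{κ/2} ∏_{j=1}^{N̄} ∏_{l=1}^{κ} sin(π(j - χ(j)^{1/κ} ζ_κ^l t)/N)`,
where `N̄ = ⌊(N-1)/2⌋`, `ζ_κ = e^{2πi/κ}`, and `(2^{N-1}/N)^{κ/2}` is the positive real
power; the infinite product is expressed as the limit of its partial products. -/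
theorem infinite_product_dirichlet_character
    (N : ℕ) (hN : 3 ≤ N) (χ : DirichletCharacter ℂ N)
    (κ : ℕ) (hκ : 1 ≤ κ) (hpar : κ % 2 = charParity χ) (t : ℂ) :
    Tendsto (fun M : ℕ => ∏ n ∈ Finset.Icc 1 M, (1 - χ n * t ^ κ / (n : ℂ) ^ κ))
      atTop
      (𝓝 ((((2 ^ (N - 1) / N : ℝ) ^ ((κ : ℝ) / 2) : ℝ) : ℂ) *
        ∏ j ∈ Finset.Icc 1 ((N - 1) / 2), ∏ l ∈ Finset.Icc 1 κ,
          Complex.sin ((Real.pi : ℂ) *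
            ((j : ℂ) - chiRoot χ κ j * Complex.exp (2 * Real.pi * Complex.I / κ) ^ l * t) / N))) := by
  have hN0 : N ≠ 0 := by omega
  have hκ0 : κ ≠ 0 := by omega
  have hχ : χ (-1) = (-1) ^ κ := by
    rw [neg_one_pow_eq_pow_mod_two, hpar, χ.map_neg_one_eq_neg_one_pow_charParity]
  have hsin (j : ℕ) : Complex.sin (Real.pi * j / N) = (Real.sin (Real.pi * j / N) : ℂ) := by
    norm_cast
  have hblocks := tendsto_finsetProd (Icc 1 ((N - 1) / 2)) fun j hj =>
    tendsto_prod_one_sub_pow_mul_one_sub_pow (isPrimitiveRoot_exp κ hκ0) (by omega)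
      (Nat.cast_ne_zero.2 hN0) (x := j) (c := chiRoot χ κ j) (t := t) (by
        rw [mem_Icc] at hj
        rw [hsin, ofReal_ne_zero]
        exact (Real.sin_pi_mul_div_pos (by omega) (by omega)).ne')
  simp_rw [← χ.prod_Icc_mul_eq_prod_pairs hN hκ0 hχ t] at hblocks
  convert tendsto_prod_Icc_of_tendsto_prod_Icc_mul hN0
    (tendsto_one_sub_mul_div_pow_atTop (fun n => χ.norm_le_one n) t hκ0) hblocks using 2
  simp only [prod_div_distrib, prod_const, Nat.card_Icc, Nat.add_sub_cancel, prod_pow, hsin]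
  rw [Real.two_pow_div_rpow_half_eq_inv_prod_sin_pow hN0]
  push_cast
  ring

end
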